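/- For every integer n ≥ 1, the n-th Pell–Lucas number satisfies Q(n) = ((2·9^(n²+2n) − 2·9^(n²+n)) mod (9^(2n) − 2·9^n − 1)) mod 9^n. -/

import Mathlib

/-
Modulo `m = x² - 2x - 1` multiplication by `x` sends `Q(n+1)·x + Q(n)` to
`(2Q(n+1) + Q(n))·x + Q(n+1) = Q(n+2)·x + Q(n+1)`, so `x^n (2x + 2) ≡ Q(n+1)·x + Q(n)`;
moreover `2x^(n+2) - 2x^(n+1) ≡ x^n (2x + 2)`. At `x = 9^n` the Pell–Lucas numbers are far
smaller than `9^n`, so the first remainder is the two-digit base-`9^n` number `Q(n+1)·x + Q(n)`,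
whose last digit is `Q(n)`.
-/

/-- The Pell–Lucas numbers: `Q(0) = 2`, `Q(1) = 2`, `Q(n+2) = 2·Q(n+1) + Q(n)`. -/
def pellLucas : ℕ → ℤ
  | 0 => 2
  | 1 => 2
  | n + 2 => 2 * pellLucas (n + 1) + pellLucas n

lemma pellLucas_add_two (n : ℕ) :
    pellLucas (n + 2) = 2 * pellLucas (n + 1) + pellLucas n := rfl

lemma pellLucas_pos : ∀ n, 0 < pellLucas n
  | 0 | 1 => by decide
  | n + 2 => by
    rw [pellLucas_add_two]
    linarith [pellLucas_pos n, pellLucas_pos (n + 1)]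

lemma pellLucas_succ_le : ∀ n : ℕ, pellLucas (n + 1) ≤ 2 * 3 ^ n
  | 0 | 1 => by decide
  | n + 2 => by
    rw [pellLucas_add_two]
    have h3 : (3 : ℤ) ^ (n + 1) = 3 * 3 ^ n := pow_succ' 3 n
    have h9 : (3 : ℤ) ^ (n + 2) = 9 * 3 ^ n := by ring
    linarith [pellLucas_succ_le n, pellLucas_succ_le (n + 1), pow_pos (three_pos : (0 : ℤ) < 3) n]

lemma pellLucas_lt_three_pow {n : ℕ} (hn : n ≠ 0) : pellLucas n < 3 ^ n := by
  obtain ⟨m, rfl⟩ := Nat.exists_eq_succ_of_ne_zero hn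
  rw [pow_succ]
  linarith [pellLucas_succ_le m, pow_pos (three_pos : (0 : ℤ) < 3) m]

lemma sq_sub_two_mul_sub_one_dvd_pow_mul_sub_pellLucas {R : Type*} [CommRing R] (x : R) :
    ∀ n : ℕ, x ^ 2 - 2 * x - 1 ∣ x ^ n * (2 * x + 2) - (pellLucas (n + 1) * x + pellLucas n)
  | 0 => ⟨0, by simp [pellLucas]⟩
  | n + 1 => by
    obtain ⟨c, hc⟩ := sq_sub_two_mul_sub_one_dvd_pow_mul_sub_pellLucas x n
    refine ⟨x * c + pellLucas (n + 1), ?_⟩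
    rw [pellLucas_add_two]
    push_cast
    linear_combination x * hc

lemma two_mul_pow_sub_emod_eq_pellLucas {B : ℤ} (hB : 0 ≤ B) {n : ℕ}
    (hlt : pellLucas (n + 1) * B + pellLucas n < B ^ 2 - 2 * B - 1) :
    (2 * B ^ (n + 2) - 2 * B ^ (n + 1)) % (B ^ 2 - 2 * B - 1) =
      pellLucas (n + 1) * B + pellLucas n := by
  obtain ⟨c, hc⟩ := sq_sub_two_mul_sub_one_dvd_pow_mul_sub_pellLucas B n
  simp only [Int.cast_id] at hc
  have hmod : 2 * B ^ (n + 2) - 2 * B ^ (n + 1) ≡ pellLucas (n + 1) * B + pellLucas n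
      [ZMOD B ^ 2 - 2 * B - 1] :=
    (Int.modEq_iff_dvd.mpr ⟨c + 2 * B ^ n, by linear_combination hc⟩).symm
  rw [hmod, Int.emod_eq_of_lt (add_nonneg (mul_nonneg (pellLucas_pos _).le hB)
    (pellLucas_pos _).le) hlt]

lemma pellLucas_add_lt {n : ℕ} (hn : n ≠ 0) :
    pellLucas (n + 1) * 9 ^ n + pellLucas n < ((9 : ℤ) ^ n) ^ 2 - 2 * 9 ^ n - 1 := by
  have h9 : (9 : ℤ) ^ n = 3 ^ n * 3 ^ n := by rw [← mul_pow]; norm_num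
  have ht : (3 : ℤ) ≤ 3 ^ n := le_self_pow₀ (by norm_num) hn
  have ha := pellLucas_succ_le n
  have hb := pellLucas_lt_three_pow hn
  rw [h9]
  generalize (3 : ℤ) ^ n = t at *
  nlinarith [mul_le_mul_of_nonneg_right ha (mul_self_nonneg t),
    mul_nonneg (mul_nonneg (sub_nonneg.2 ht) (by positivity : (0 : ℤ) ≤ t ^ 2 + t + 1))
      (by linarith : (0 : ℤ) ≤ t)]

theorem stmt_16 (n : ℕ) (hn : 1 ≤ n) :
    pellLucas n =
      ((2 * (9 : ℤ) ^ (n ^ 2 + 2 * n) - 2 * 9 ^ (n ^ 2 + n)) % ((9 : ℤ) ^ (2 * n) - 2 * 9 ^ n - 1))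
        % (9 : ℤ) ^ n := by
  have hn0 : n ≠ 0 := by omega
  rw [show n ^ 2 + 2 * n = n * (n + 2) by ring, show n ^ 2 + n = n * (n + 1) by ring,
    mul_comm 2 n, pow_mul, pow_mul, pow_mul,
    two_mul_pow_sub_emod_eq_pellLucas (by positivity) (pellLucas_add_lt hn0),
    add_comm, Int.add_mul_emod_self_right, Int.emod_eq_of_lt (pellLucas_pos n).le
      ((pellLucas_lt_three_pow hn0).trans_le (pow_le_pow_left₀ (by norm_num) (by norm_num) n))]
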